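/- Let N ≥ 2, let x and y be N×N real symmetric positive semidefinite matrices, and let m be an arbitrary N×N real matrix. Define e₂(x) = ½(Tr(x)² − Tr(x²)). Then: (1) 0 ≤ e₂(x) ≤ ½·Tr(x)²; (2) e₂(x+y) ≤ e₂(x) + e₂(y) + Tr(x)·Tr(y); (3) Tr(m x mᵀ) ≤ λ₁(m mᵀ)·Tr(x); (4) e₂(m x mᵀ) ≤ λ₁(m mᵀ)·λ₂(m mᵀ)·e₂(x). -/

import Mathlib

open MeasureTheory ProbabilityTheory Matrix Filter
open scoped ENNReal Topology

noncomputable section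

/-- The space of `N × N` real matrices. -/
abbrev Mat (N : ℕ) := Matrix (Fin N) (Fin N) ℝ

instance (N : ℕ) : MeasurableSpace (Mat N) :=
  inferInstanceAs (MeasurableSpace (Fin N → Fin N → ℝ))

instance (N : ℕ) : BorelSpace (Mat N) :=
  inferInstanceAs (BorelSpace (Fin N → Fin N → ℝ))

open scoped Classical in
/-- The eigenvalues of a matrix (junk value `0` if the matrix is not symmetric). -/
def eigs {N : ℕ} (s : Mat N) : Fin N → ℝ :=
  if h : s.IsHermitian then h.eigenvalues else fun _ => 0

/-- The largest eigenvalue of a symmetric matrix. -/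
def lambdaMax {N : ℕ} (s : Mat N) : ℝ := ⨆ i, eigs s i

/-- The eigenvalues of a symmetric matrix in nonincreasing order:
`eigDesc s k` is the `(k+1)`-th largest eigenvalue `λ_{k+1}(s)`. -/
def eigDesc {N : ℕ} (s : Mat N) (k : Fin N) : ℝ :=
  (eigs s ∘ Tuple.sort (eigs s)) k.rev

open scoped Classical in
/-- The positive semidefinite square root of a positive semidefinite matrix
(junk value `0` otherwise). -/
def msqrt {N : ℕ} (a : Mat N) : Mat N :=
  if h : a.PosSemidef then
    h.1.eigenvectorUnitary.1 * diagonal (Real.sqrt ∘ h.1.eigenvalues) *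
      (star h.1.eigenvectorUnitary : Mat N)
  else 0

/-- `log⁺ x = max (log x) 0`. -/
def logPlus (x : ℝ) : ℝ := max (Real.log x) 0

/-- The expectation of a (not necessarily integrable) real random variable, with values in
`[-∞, +∞]`: the difference of the lower integrals of the positive and negative parts. -/
def sInt {Ω : Type*} [MeasurableSpace Ω] (P : Measure Ω) (f : Ω → ℝ) : EReal :=
  ((∫⁻ ω, ENNReal.ofReal (f ω) ∂P : ℝ≥0∞) : EReal) -
    ((∫⁻ ω, ENNReal.ofReal (-f ω) ∂P : ℝ≥0∞) : EReal)

/-- `leftProd A n = A₁ ⋯ A_n` (`0`-indexed: `A 0 * A 1 * ⋯ * A (n-1)`). -/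
def leftProd {Ω : Type*} {N : ℕ} (A : ℕ → Ω → Mat N) : ℕ → Ω → Mat N
  | 0 => fun _ => 1
  | n + 1 => fun ω => leftProd A n ω * A n ω

/-- The top Lyapunov exponent
`γ = inf_{n ≥ 1} (1/n) E[log λ_max(A₁ ⋯ A_n A_nᵀ ⋯ A₁ᵀ)]`, a value in `[-∞, +∞)`. -/
def lyap {Ω : Type*} [MeasurableSpace Ω] {N : ℕ} (P : Measure Ω) (A : ℕ → Ω → Mat N) : EReal :=
  ⨅ n : ℕ, (((1 : ℝ) / (n + 1) : ℝ) : EReal) *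
    sInt P (fun ω => Real.log (lambdaMax (leftProd A (n + 1) ω * (leftProd A (n + 1) ω)ᵀ)))

/-- The `k × k` leading principal submatrix. -/
def subK {N k : ℕ} (hk : k ≤ N) (x : Mat N) : Mat k :=
  x.submatrix (Fin.castLE hk) (Fin.castLE hk)

end

/-- The second elementary symmetric polynomial of the eigenvalues,
`e₂(x) = ½(Tr(x)² − Tr(x²))`. -/
noncomputable def e2 {N : ℕ} (x : Mat N) : ℝ :=
  (1 / 2) * ((x.trace) ^ 2 - (x * x).trace)

namespace E2Aux
open Matrix
variable {N : ℕ}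

lemma quad_form (V : Mat N) (d : Fin N → ℝ) (z : Fin N → ℝ) :
    z ⬝ᵥ ((V * diagonal d * Vᵀ) *ᵥ z) = ∑ i, d i * ((Vᵀ *ᵥ z) i) ^ 2 := by
  rw [← mulVec_mulVec, ← mulVec_mulVec, dotProduct_mulVec, ← mulVec_transpose]
  simp [dotProduct, mulVec_diagonal]
  exact Finset.sum_congr rfl fun i _ => by ring

lemma norm_form (V : Mat N) (hV : V * Vᵀ = 1) (z : Fin N → ℝ) :
    ∑ i, ((Vᵀ *ᵥ z) i) ^ 2 = z ⬝ᵥ z := by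
  have h : (Vᵀ *ᵥ z) ⬝ᵥ (Vᵀ *ᵥ z) = z ⬝ᵥ z := by
    rw [dotProduct_mulVec, vecMul_transpose, mulVec_mulVec, hV, one_mulVec]
  rw [← h]; simp [dotProduct, sq]

lemma dot_self_nonneg (z : Fin N → ℝ) : 0 ≤ z ⬝ᵥ z :=
  Finset.sum_nonneg fun i _ => mul_self_nonneg _

lemma dot_cs (f g : Fin N → ℝ) : (f ⬝ᵥ g) ^ 2 ≤ (f ⬝ᵥ f) * (g ⬝ᵥ g) := by
  have h := Finset.sum_mul_sq_le_sq_mul_sq Finset.univ f g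
  simp only [dotProduct, ← sq]
  exact h

lemma trace_conj (c : Mat N) (d : Fin N → ℝ) :
    (c * diagonal d * cᵀ).trace = ∑ k, (cᵀ * c) k k * d k := by
  rw [trace_mul_comm, ← mul_assoc]
  simp [Matrix.trace, Matrix.diag, Matrix.mul_diagonal]

lemma trace_gd_sq (g : Mat N) (hg : ∀ k l, g l k = g k l) (d : Fin N → ℝ) :
    ((g * diagonal d) * (g * diagonal d)).trace = ∑ k, ∑ l, d k * d l * (g k l) ^ 2 := by
  have entry : ∀ k l, (g * diagonal d) k l = g k l * d l := fun k l => Matrix.mul_diagonal d g k l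
  simp only [Matrix.trace, Matrix.diag, Matrix.mul_apply, entry]
  refine Finset.sum_congr rfl fun k _ => Finset.sum_congr rfl fun l _ => ?_
  rw [hg k l]; ring

lemma trace_conj_sq (c : Mat N) (d : Fin N → ℝ) :
    ((c * diagonal d * cᵀ) * (c * diagonal d * cᵀ)).trace
      = ∑ k, ∑ l, d k * d l * ((cᵀ * c) k l) ^ 2 := by
  have hg : ∀ k l, (cᵀ * c) l k = (cᵀ * c) k l := by
    intro k l; simp [Matrix.mul_apply, mul_comm]
  have h2 := trace_gd_sq (cᵀ * c) hg d
  have e1 : (c * diagonal d * cᵀ) * (c * diagonal d * cᵀ)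
      = c * (diagonal d * cᵀ * c * diagonal d * cᵀ) := by simp only [mul_assoc]
  rw [e1, trace_mul_comm]
  have e2 : diagonal d * cᵀ * c * diagonal d * cᵀ * c
      = diagonal d * (cᵀ * c * diagonal d * cᵀ * c) := by simp only [mul_assoc]
  rw [e2, trace_mul_comm]
  have e3 : cᵀ * c * diagonal d * cᵀ * c * diagonal d
      = (cᵀ * c * diagonal d) * (cᵀ * c * diagonal d) := by simp only [mul_assoc]
  rw [e3, h2]

lemma sort_max (hN : 1 ≤ N) (d : Fin N → ℝ) (i : Fin N) :
    d i ≤ (d ∘ Tuple.sort d) ⟨N - 1, by omega⟩ := by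
  have h1 : d i = (d ∘ Tuple.sort d) ((Tuple.sort d)⁻¹ i) := by simp
  rw [h1]
  apply Tuple.monotone_sort d
  simp only [Fin.le_def, Fin.val_mk]
  have := ((Tuple.sort d)⁻¹ i).isLt
  omega

lemma sort_second (hN : 2 ≤ N) (d : Fin N → ℝ) (i₀ : Fin N) (hmax : ∀ i, d i ≤ d i₀)
    (i : Fin N) (hi : i ≠ i₀) : d i ≤ (d ∘ Tuple.sort d) ⟨N - 2, by omega⟩ := by
  set σ := Tuple.sort d with hσ
  have h1 : d i = (d ∘ σ) (σ⁻¹ i) := by simp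
  have h2 : d i₀ = (d ∘ σ) (σ⁻¹ i₀) := by simp
  have hne : σ⁻¹ i ≠ σ⁻¹ i₀ := fun h => hi (by simpa using congrArg σ h)
  by_cases hj : ((σ⁻¹ i : Fin N) : ℕ) ≤ N - 2
  · rw [h1]
    exact Tuple.monotone_sort d (by simp only [Fin.le_def, Fin.val_mk]; omega)
  · have hp : ((σ⁻¹ i₀ : Fin N) : ℕ) ≤ N - 2 := by
      have h3 := ((σ⁻¹ i₀ : Fin N)).isLt
      have h4 := ((σ⁻¹ i : Fin N)).isLt
      rcases Nat.lt_or_ge ((σ⁻¹ i₀ : Fin N) : ℕ) (N-1) with h | h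
      · omega
      · exfalso; exact hne (Fin.ext (by omega))
    calc d i ≤ d i₀ := hmax i
    _ = (d ∘ σ) (σ⁻¹ i₀) := h2
    _ ≤ (d ∘ σ) ⟨N - 2, by omega⟩ :=
        Tuple.monotone_sort d (by simp only [Fin.le_def, Fin.val_mk]; omega)

lemma rayleigh1 (m V : Mat N) (d : Fin N → ℝ) (hspec : m * mᵀ = V * diagonal d * Vᵀ)
    (hV1 : V * Vᵀ = 1) (lam : ℝ) (hlam : ∀ i, d i ≤ lam) (z : Fin N → ℝ) :
    z ⬝ᵥ ((m * mᵀ) *ᵥ z) ≤ lam * (z ⬝ᵥ z) := by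
  rw [hspec, quad_form]
  calc ∑ i, d i * ((Vᵀ *ᵥ z) i) ^ 2 ≤ ∑ i, lam * ((Vᵀ *ᵥ z) i) ^ 2 :=
        Finset.sum_le_sum fun i _ => mul_le_mul_of_nonneg_right (hlam i) (sq_nonneg _)
  _ = lam * (z ⬝ᵥ z) := by rw [← Finset.mul_sum, norm_form V hV1]

lemma rayleigh2 (m V : Mat N) (d : Fin N → ℝ) (hspec : m * mᵀ = V * diagonal d * Vᵀ)
    (hV1 : V * Vᵀ = 1) (i₀ : Fin N) (lam : ℝ) (hlam : ∀ i, i ≠ i₀ → d i ≤ lam)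
    (z : Fin N → ℝ) (hz : (Vᵀ *ᵥ z) i₀ = 0) :
    z ⬝ᵥ ((m * mᵀ) *ᵥ z) ≤ lam * (z ⬝ᵥ z) := by
  rw [hspec, quad_form]
  calc ∑ i, d i * ((Vᵀ *ᵥ z) i) ^ 2 ≤ ∑ i, lam * ((Vᵀ *ᵥ z) i) ^ 2 := by
        refine Finset.sum_le_sum fun i _ => ?_
        by_cases h : i = i₀
        · subst h; rw [hz]; simp
        · exact mul_le_mul_of_nonneg_right (hlam i h) (sq_nonneg _)
  _ = lam * (z ⬝ᵥ z) := by rw [← Finset.mul_sum, norm_form V hV1]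

lemma dot_mv_self (m : Mat N) (z : Fin N → ℝ) :
    (m *ᵥ z) ⬝ᵥ (m *ᵥ z) = (mᵀ *ᵥ (m *ᵥ z)) ⬝ᵥ z := by
  conv_lhs => rw [dotProduct_mulVec]
  rw [mulVec_transpose]

lemma dot_mvt_self (m : Mat N) (w : Fin N → ℝ) :
    (mᵀ *ᵥ w) ⬝ᵥ (mᵀ *ᵥ w) = w ⬝ᵥ ((m * mᵀ) *ᵥ w) := by
  rw [dotProduct_mulVec, vecMul_transpose, mulVec_mulVec, dotProduct_comm]

lemma mv_sq_le_aux (m : Mat N) (lam : ℝ) (hlam0 : 0 ≤ lam) (z : Fin N → ℝ)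
    (hray : (m *ᵥ z) ⬝ᵥ ((m * mᵀ) *ᵥ (m *ᵥ z)) ≤ lam * ((m *ᵥ z) ⬝ᵥ (m *ᵥ z))) :
    (m *ᵥ z) ⬝ᵥ (m *ᵥ z) ≤ lam * (z ⬝ᵥ z) := by
  set w := m *ᵥ z with hw
  have h3 : (w ⬝ᵥ w) ^ 2 ≤ (w ⬝ᵥ ((m * mᵀ) *ᵥ w)) * (z ⬝ᵥ z) := by
    calc (w ⬝ᵥ w) ^ 2 = ((mᵀ *ᵥ w) ⬝ᵥ z) ^ 2 := by rw [hw]; rw [dot_mv_self]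
    _ ≤ ((mᵀ *ᵥ w) ⬝ᵥ (mᵀ *ᵥ w)) * (z ⬝ᵥ z) := dot_cs _ _
    _ = (w ⬝ᵥ ((m * mᵀ) *ᵥ w)) * (z ⬝ᵥ z) := by rw [dot_mvt_self]
  rcases (dot_self_nonneg w).eq_or_lt.imp Eq.symm id with h0 | h0
  · rw [h0]
    exact mul_nonneg hlam0 (dot_self_nonneg z)
  · nlinarith [dot_self_nonneg z]

lemma dot_rot (p q : Fin N → ℝ) (α β γ δ : ℝ) :
    (α • p + β • q) ⬝ᵥ (γ • p + δ • q)
      = α * γ * (p ⬝ᵥ p) + (α * δ + β * γ) * (p ⬝ᵥ q) + β * δ * (q ⬝ᵥ q) := by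
  simp only [dotProduct_add, add_dotProduct, dotProduct_smul, smul_dotProduct, smul_eq_mul,
    dotProduct_comm q p]
  ring

lemma col_dot (V : Mat N) (i₀ : Fin N) (z : Fin N → ℝ) :
    (Vᵀ *ᵥ z) i₀ = (fun j => V j i₀) ⬝ᵥ z := by
  simp [mulVec, dotProduct, transpose_apply]

lemma rot_exists (a b e : ℝ) : ∃ c s : ℝ, c ^ 2 + s ^ 2 = 1 ∧
    c * s * (b - a) + (c ^ 2 - s ^ 2) * e = 0 := by
  set f : ℝ → ℝ := fun θ =>
    Real.cos θ * Real.sin θ * (b - a) + ((Real.cos θ) ^ 2 - (Real.sin θ) ^ 2) * e with hf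
  have hcont : ContinuousOn f (Set.uIcc 0 (Real.pi / 2)) := by fun_prop
  have hmem : (0 : ℝ) ∈ Set.uIcc (f 0) (f (Real.pi / 2)) := by
    have h0 : f 0 = e := by simp [hf]
    have h1 : f (Real.pi / 2) = -e := by simp [hf]
    rw [h0, h1]
    rcases le_total 0 e with h | h
    · exact Set.mem_uIcc.mpr (Or.inr ⟨by linarith, h⟩)
    · exact Set.mem_uIcc.mpr (Or.inl ⟨h, by linarith⟩)
  obtain ⟨θ, _, hθ⟩ := intermediate_value_uIcc hcont hmem
  exact ⟨Real.cos θ, Real.sin θ, Real.cos_sq_add_sin_sq θ, hθ⟩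

lemma ortho_pair_core (m V : Mat N) (d : Fin N → ℝ) (hspec : m * mᵀ = V * diagonal d * Vᵀ)
    (hV1 : V * Vᵀ = 1) (i₀ : Fin N) (lam1 lam2 : ℝ)
    (hl1 : ∀ i, d i ≤ lam1) (hl2 : ∀ i, i ≠ i₀ → d i ≤ lam2)
    (hl10 : 0 ≤ lam1) (hl20 : 0 ≤ lam2)
    (u v : Fin N → ℝ) (huu : u ⬝ᵥ u = 1) (hvv : v ⬝ᵥ v = 1) (huv : u ⬝ᵥ v = 0)
    (hmuv : (m *ᵥ u) ⬝ᵥ (m *ᵥ v) = 0)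
    (hba : (m *ᵥ v) ⬝ᵥ (m *ᵥ v) ≤ (m *ᵥ u) ⬝ᵥ (m *ᵥ u)) :
    ((m *ᵥ u) ⬝ᵥ (m *ᵥ u)) * ((m *ᵥ v) ⬝ᵥ (m *ᵥ v)) ≤ lam1 * lam2 := by
  set a := (m *ᵥ u) ⬝ᵥ (m *ᵥ u) with haa
  set b := (m *ᵥ v) ⬝ᵥ (m *ᵥ v) with hbb
  have ha : a ≤ lam1 := by
    have h := mv_sq_le_aux m lam1 hl10 u (rayleigh1 m V d hspec hV1 lam1 hl1 (m *ᵥ u))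
    rw [huu, mul_one] at h; exact h
  have hb0 : 0 ≤ b := dot_self_nonneg _
  suffices hb : b ≤ lam2 by nlinarith
  set col := (fun j => V j i₀) with hcol
  set α := -(col ⬝ᵥ (m *ᵥ v)) with hα
  set β := col ⬝ᵥ (m *ᵥ u) with hβ
  by_cases hc : α = 0 ∧ β = 0
  · have hcond : (Vᵀ *ᵥ (m *ᵥ v)) i₀ = 0 := by
      rw [col_dot]; have := hc.1; rw [hα] at this; linarith [neg_eq_zero.mp this]
    have h := mv_sq_le_aux m lam2 hl20 v
      (rayleigh2 m V d hspec hV1 i₀ lam2 hl2 (m *ᵥ v) hcond)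
    rw [hvv, mul_one] at h; exact h
  · have hpos : 0 < α ^ 2 + β ^ 2 := by
      rcases not_and_or.mp hc with h | h
      · positivity
      · positivity
    set w := α • u + β • v with hw
    have hmw : m *ᵥ w = α • (m *ᵥ u) + β • (m *ᵥ v) := by
      rw [hw, mulVec_add, mulVec_smul, mulVec_smul]
    have hcond : (Vᵀ *ᵥ (m *ᵥ w)) i₀ = 0 := by
      rw [col_dot, hmw]
      simp only [dotProduct_add, dotProduct_smul, smul_eq_mul]
      rw [hα, hβ]; ring
    have h := mv_sq_le_aux m lam2 hl20 w
      (rayleigh2 m V d hspec hV1 i₀ lam2 hl2 (m *ᵥ w) hcond)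
    have hww : w ⬝ᵥ w = α ^ 2 + β ^ 2 := by
      rw [hw, dot_rot, huu, hvv, huv]; ring
    have hmww : (m *ᵥ w) ⬝ᵥ (m *ᵥ w) = α ^ 2 * a + β ^ 2 * b := by
      rw [hmw, dot_rot, hmuv, ← haa, ← hbb]; ring
    rw [hww, hmww] at h
    nlinarith

lemma plane_bound (m V : Mat N) (d : Fin N → ℝ) (hspec : m * mᵀ = V * diagonal d * Vᵀ)
    (hV1 : V * Vᵀ = 1) (i₀ : Fin N) (lam1 lam2 : ℝ)
    (hl1 : ∀ i, d i ≤ lam1) (hl2 : ∀ i, i ≠ i₀ → d i ≤ lam2)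
    (hl10 : 0 ≤ lam1) (hl20 : 0 ≤ lam2)
    (u v : Fin N → ℝ) (huu : u ⬝ᵥ u = 1) (hvv : v ⬝ᵥ v = 1) (huv : u ⬝ᵥ v = 0) :
    ((m *ᵥ u) ⬝ᵥ (m *ᵥ u)) * ((m *ᵥ v) ⬝ᵥ (m *ᵥ v)) - ((m *ᵥ u) ⬝ᵥ (m *ᵥ v)) ^ 2
      ≤ lam1 * lam2 := by
  set p := m *ᵥ u with hp
  set q := m *ᵥ v with hq
  set a := p ⬝ᵥ p with haa
  set b := q ⬝ᵥ q with hbb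
  set e := p ⬝ᵥ q with hee
  obtain ⟨c, s, hcs, hrot⟩ := rot_exists a b e
  set u' := c • u + s • v with hu'
  set v' := (-s) • u + c • v with hv'
  have hpu' : m *ᵥ u' = c • p + s • q := by rw [hu', mulVec_add, mulVec_smul, mulVec_smul]
  have hpv' : m *ᵥ v' = (-s) • p + c • q := by rw [hv', mulVec_add, mulVec_smul, mulVec_smul]
  have hu'u' : u' ⬝ᵥ u' = 1 := by
    rw [hu', dot_rot, huu, hvv, huv]; linear_combination hcs
  have hv'v' : v' ⬝ᵥ v' = 1 := by
    rw [hv', dot_rot, huu, hvv, huv]; linear_combination hcs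
  have hu'v' : u' ⬝ᵥ v' = 0 := by
    rw [hu', hv', dot_rot, huu, hvv, huv]; ring
  have hmu'v' : (m *ᵥ u') ⬝ᵥ (m *ᵥ v') = 0 := by
    rw [hpu', hpv', dot_rot, ← haa, ← hbb, ← hee]
    linear_combination hrot
  have hGinv : ((m *ᵥ u') ⬝ᵥ (m *ᵥ u')) * ((m *ᵥ v') ⬝ᵥ (m *ᵥ v')) = a * b - e ^ 2 := by
    have h1 : (m *ᵥ u') ⬝ᵥ (m *ᵥ u')
        = c * c * a + (c * s + s * c) * e + s * s * b := by
      rw [hpu', dot_rot, ← haa, ← hbb, ← hee]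
    have h2 : (m *ᵥ v') ⬝ᵥ (m *ᵥ v')
        = (-s) * (-s) * a + ((-s) * c + c * (-s)) * e + c * c * b := by
      rw [hpv', dot_rot, ← haa, ← hbb, ← hee]
    have h3 : (m *ᵥ u') ⬝ᵥ (m *ᵥ v')
        = c * (-s) * a + (c * c + s * (-s)) * e + s * c * b := by
      rw [hpu', hpv', dot_rot, ← haa, ← hbb, ← hee]
    have h4 := hmu'v'
    rw [h3] at h4
    rw [h1, h2]
    linear_combination ((c ^ 2 + s ^ 2 + 1) * (a * b - e ^ 2)) * hcs
      + (c * -s * a + (c * c + s * -s) * e + s * c * b) * h4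
  rw [← haa, ← hbb, ← hee] at *
  rw [← hGinv]
  rcases le_total ((m *ᵥ v') ⬝ᵥ (m *ᵥ v')) ((m *ᵥ u') ⬝ᵥ (m *ᵥ u')) with h | h
  · exact ortho_pair_core m V d hspec hV1 i₀ lam1 lam2 hl1 hl2 hl10 hl20 u' v'
      hu'u' hv'v' hu'v' hmu'v' h
  · rw [mul_comm]
    exact ortho_pair_core m V d hspec hV1 i₀ lam1 lam2 hl1 hl2 hl10 hl20 v' u'
      hv'v' hu'u' (by rw [dotProduct_comm]; exact hu'v')
      (by rw [dotProduct_comm]; exact hmu'v') h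

lemma spectral_real (A : Mat N) (hA : A.IsHermitian) :
    A = (hA.eigenvectorUnitary : Mat N) * diagonal hA.eigenvalues
        * (hA.eigenvectorUnitary : Mat N)ᵀ := by
  have h := hA.spectral_theorem
  rwa [Unitary.conjStarAlgAut_apply, star_eq_conjTranspose,
    conjTranspose_eq_transpose_of_trivial] at h

lemma unitary_VVt (A : Mat N) (hA : A.IsHermitian) :
    (hA.eigenvectorUnitary : Mat N) * (hA.eigenvectorUnitary : Mat N)ᵀ = 1 := by
  rw [← conjTranspose_eq_transpose_of_trivial, ← star_eq_conjTranspose]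
  exact Matrix.mem_unitaryGroup_iff.mp hA.eigenvectorUnitary.2

lemma unitary_VtV (A : Mat N) (hA : A.IsHermitian) :
    (hA.eigenvectorUnitary : Mat N)ᵀ * (hA.eigenvectorUnitary : Mat N) = 1 := by
  rw [← conjTranspose_eq_transpose_of_trivial, ← star_eq_conjTranspose]
  exact Matrix.mem_unitaryGroup_iff'.mp hA.eigenvectorUnitary.2

lemma gram_entry (m V : Mat N) (k l : Fin N) :
    ((m * V)ᵀ * (m * V)) k l = (m *ᵥ (fun j => V j k)) ⬝ᵥ (m *ᵥ (fun j => V j l)) := by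
  simp only [Matrix.mul_apply, Matrix.mulVec, dotProduct, Matrix.transpose_apply]

lemma col_norm (V : Mat N) (k l : Fin N) :
    (fun j => V j k) ⬝ᵥ (fun j => V j l) = (Vᵀ * V) k l := by
  simp [Matrix.mul_apply, dotProduct, Matrix.transpose_apply]

lemma psd_trace_nonneg (M : Mat N) (hM : M.PosSemidef) : 0 ≤ M.trace := by
  rw [spectral_real M hM.1, trace_conj, unitary_VtV M hM.1]
  exact Finset.sum_nonneg fun k _ => by
    rw [Matrix.one_apply_eq, one_mul]; exact hM.eigenvalues_nonneg k

lemma sum_diag_sq (dd : Fin N → ℝ) :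
    ∑ k, ∑ l, dd k * dd l * ((1 : Mat N) k l) ^ 2 = ∑ k, dd k ^ 2 := by
  refine Finset.sum_congr rfl fun k _ => ?_
  rw [Finset.sum_eq_single k]
  · rw [Matrix.one_apply_eq]; ring
  · intro l _ hlk; rw [Matrix.one_apply_ne (Ne.symm hlk)]; ring
  · intro h; exact absurd (Finset.mem_univ k) h

lemma sum_offdiag (μv : Fin N → ℝ) (L : ℝ) :
    ∑ k, ∑ l, μv k * μv l * (if k = l then 0 else L)
      = L * ((∑ k, μv k) ^ 2 - ∑ k, μv k ^ 2) := by
  have h : ∀ k l : Fin N, μv k * μv l * (if k = l then 0 else L)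
      = μv k * μv l * L - (if k = l then μv k * μv l * L else 0) := by
    intro k l; by_cases h : k = l <;> simp [h]
  simp_rw [h, Finset.sum_sub_distrib, Finset.sum_ite_eq, Finset.mem_univ, if_true]
  have h2 : (∑ k, μv k) ^ 2 = ∑ k, ∑ l, μv k * μv l := by
    rw [sq, Finset.sum_mul_sum]
  rw [h2, mul_sub]
  congr 1
  · rw [Finset.mul_sum]
    refine Finset.sum_congr rfl fun k _ => ?_
    rw [Finset.mul_sum]
    exact Finset.sum_congr rfl fun l _ => by ring
  · rw [Finset.mul_sum]
    exact Finset.sum_congr rfl fun k _ => by ring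

end E2Aux

namespace E2Aux
open Matrix
variable {N : ℕ}

lemma zero_lt_of_two_le (hN : 2 ≤ N) : 0 < N := by omega

lemma one_lt_of_two_le (hN : 2 ≤ N) : 1 < N := by omega

open scoped MatrixOrder in
lemma psd_sqrt_exists (x : Mat N) (hx : x.PosSemidef) :
    ∃ s : Mat N, s.PosSemidef ∧ s * s = x :=
  ⟨CFC.sqrt x, (CFC.sqrt_nonneg x).posSemidef, CFC.sqrt_mul_sqrt_self x hx.nonneg⟩

lemma eigs_eq (A : Mat N) (hA : A.IsHermitian) : eigs A = hA.eigenvalues := by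
  unfold eigs
  rw [dif_pos hA]

lemma eigDesc_zero (hN : 2 ≤ N) (A : Mat N) (hA : A.IsHermitian) :
    eigDesc A ⟨0, zero_lt_of_two_le hN⟩ = (hA.eigenvalues ∘ Tuple.sort hA.eigenvalues) ⟨N - 1, by omega⟩ := by
  have h : (⟨0, by omega⟩ : Fin N).rev = (⟨N - 1, by omega⟩ : Fin N) := by
    apply Fin.ext; simp only [Fin.val_rev, Fin.val_mk]
  simp only [eigDesc, eigs_eq A hA, h]

lemma eigDesc_one (hN : 2 ≤ N) (A : Mat N) (hA : A.IsHermitian) :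
    eigDesc A ⟨1, one_lt_of_two_le hN⟩ = (hA.eigenvalues ∘ Tuple.sort hA.eigenvalues) ⟨N - 2, by omega⟩ := by
  have h : (⟨1, by omega⟩ : Fin N).rev = (⟨N - 2, by omega⟩ : Fin N) := by
    apply Fin.ext; simp only [Fin.val_rev, Fin.val_mk]
  simp only [eigDesc, eigs_eq A hA, h]

end E2Aux


/-- Deterministic inequalities for `e₂` and the trace: for `N ≥ 2`,
positive semidefinite `x, y` and arbitrary `m`:
(1) `0 ≤ e₂(x) ≤ ½ Tr(x)²`; (2) `e₂(x+y) ≤ e₂(x) + e₂(y) + Tr(x)Tr(y)`;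
(3) `Tr(m x mᵀ) ≤ λ₁(m mᵀ) Tr(x)`; (4) `e₂(m x mᵀ) ≤ λ₁(m mᵀ) λ₂(m mᵀ) e₂(x)`. -/
theorem e2_trace_inequalities
    {N : ℕ} (hN : 2 ≤ N) (x y m : Mat N)
    (hx : x.PosSemidef) (hy : y.PosSemidef) :
    (0 ≤ e2 x ∧ e2 x ≤ (1 / 2) * (x.trace) ^ 2) ∧
    (e2 (x + y) ≤ e2 x + e2 y + x.trace * y.trace) ∧
    ((m * x * mᵀ).trace ≤ eigDesc (m * mᵀ) ⟨0, by omega⟩ * x.trace) ∧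
    (e2 (m * x * mᵀ) ≤
      eigDesc (m * mᵀ) ⟨0, by omega⟩ * eigDesc (m * mᵀ) ⟨1, by omega⟩ * e2 x) := by
  classical
  have hxh : x.IsHermitian := hx.1
  set W : Mat N := (hxh.eigenvectorUnitary : Mat N) with hWdef
  set μ : Fin N → ℝ := hxh.eigenvalues with hμdef
  have hWspec : x = W * diagonal μ * Wᵀ := E2Aux.spectral_real x hxh
  have hW2 : Wᵀ * W = 1 := E2Aux.unitary_VtV x hxh
  have hμ0 : ∀ k, 0 ≤ μ k := fun k => hx.eigenvalues_nonneg k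
  have htrx : x.trace = ∑ k, μ k := by
    rw [hWspec, E2Aux.trace_conj, hW2]
    simp [Matrix.one_apply_eq]
  have htrxx : (x * x).trace = ∑ k, μ k ^ 2 := by
    rw [hWspec, E2Aux.trace_conj_sq, hW2, E2Aux.sum_diag_sq]
  have he2x : e2 x = (1/2) * ((∑ k, μ k) ^ 2 - ∑ k, μ k ^ 2) := by
    unfold e2; rw [htrx, htrxx]
  -- part 1
  have part1a : 0 ≤ e2 x := by
    rw [he2x]
    have h := Finset.sum_sq_le_sq_sum_of_nonneg (s := Finset.univ) (f := μ)
      fun i _ => hμ0 i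
    linarith
  have part1b : e2 x ≤ (1/2) * x.trace ^ 2 := by
    unfold e2
    have h : 0 ≤ (x * x).trace := by rw [htrxx]; positivity
    linarith
  -- part 2
  obtain ⟨sx, hb, hsx⟩ := E2Aux.psd_sqrt_exists x hx
  have hxyt : 0 ≤ (x * y).trace := by
    have hxb : sx * sx = x := hsx
    have hxy : x * y = sx * (sx * y) := by rw [← Matrix.mul_assoc, hxb]
    rw [hxy, Matrix.trace_mul_comm]
    have hpsd : (sx * y * sxᴴ).PosSemidef := hy.mul_mul_conjTranspose_same sx
    rw [hb.1] at hpsd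
    exact E2Aux.psd_trace_nonneg _ hpsd
  have part2 : e2 (x + y) ≤ e2 x + e2 y + x.trace * y.trace := by
    unfold e2
    have hT1 : (x + y).trace = x.trace + y.trace := Matrix.trace_add x y
    have hT2 : ((x + y) * (x + y)).trace
        = (x * x).trace + 2 * (x * y).trace + (y * y).trace := by
      have hexp : (x + y) * (x + y) = x * x + x * y + (y * x + y * y) := by
        rw [add_mul, mul_add, mul_add]
      rw [hexp, Matrix.trace_add, Matrix.trace_add, Matrix.trace_add,
        Matrix.trace_mul_comm y x]
      ring
    rw [hT1, hT2]
    nlinarith [hxyt]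
  -- eigen data for m * mᵀ
  have hmh : (m * mᵀ).IsHermitian := by
    have h := Matrix.isHermitian_mul_conjTranspose_self m
    rwa [Matrix.conjTranspose_eq_transpose_of_trivial] at h
  have hmpsd : (m * mᵀ).PosSemidef := by
    have h := Matrix.posSemidef_self_mul_conjTranspose m
    rwa [Matrix.conjTranspose_eq_transpose_of_trivial] at h
  set V : Mat N := (hmh.eigenvectorUnitary : Mat N) with hVdef
  set dd : Fin N → ℝ := hmh.eigenvalues with hdddef
  have hVspec : m * mᵀ = V * diagonal dd * Vᵀ := E2Aux.spectral_real _ hmh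
  have hV1 : V * Vᵀ = 1 := E2Aux.unitary_VVt _ hmh
  have hd0 : ∀ i, 0 ≤ dd i := fun i => hmpsd.eigenvalues_nonneg i
  set lam1 := eigDesc (m * mᵀ) ⟨0, by omega⟩ with hlam1def
  set lam2 := eigDesc (m * mᵀ) ⟨1, by omega⟩ with hlam2def
  have hl1 : ∀ i, dd i ≤ lam1 := by
    intro i
    rw [hlam1def, E2Aux.eigDesc_zero hN _ hmh]
    exact E2Aux.sort_max (by omega) dd i
  obtain ⟨i₀, hmax⟩ : ∃ i₀, ∀ i, dd i ≤ dd i₀ := by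
    have : Nonempty (Fin N) := ⟨⟨0, by omega⟩⟩
    exact Finite.exists_max dd
  have hl2 : ∀ i, i ≠ i₀ → dd i ≤ lam2 := by
    intro i hi
    rw [hlam2def, E2Aux.eigDesc_one hN _ hmh]
    exact E2Aux.sort_second hN dd i₀ hmax i hi
  have hl10 : 0 ≤ lam1 := le_trans (hd0 ⟨0, by omega⟩) (hl1 _)
  have hl20 : 0 ≤ lam2 := by
    rw [hlam2def, E2Aux.eigDesc_one hN _ hmh]
    exact hd0 _
  -- parts 3 and 4
  set cM : Mat N := m * W with hcMdef
  have hmxm : m * x * mᵀ = cM * diagonal μ * cMᵀ := by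
    rw [hWspec, hcMdef]
    simp only [Matrix.transpose_mul, Matrix.mul_assoc]
  have hgram : ∀ k l, (cMᵀ * cM) k l
      = (m *ᵥ (fun j => W j k)) ⬝ᵥ (m *ᵥ (fun j => W j l)) := by
    intro k l; rw [hcMdef]; exact E2Aux.gram_entry m W k l
  have hcol1 : ∀ k, (fun j => W j k) ⬝ᵥ (fun j => W j k) = 1 := by
    intro k; rw [E2Aux.col_norm, hW2, Matrix.one_apply_eq]
  have hcol0 : ∀ k l, k ≠ l → (fun j => W j k) ⬝ᵥ (fun j => W j l) = 0 := by
    intro k l hkl; rw [E2Aux.col_norm, hW2, Matrix.one_apply_ne hkl]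
  have hgkk : ∀ k, (cMᵀ * cM) k k ≤ lam1 := by
    intro k
    rw [hgram]
    have h := E2Aux.mv_sq_le_aux m lam1 hl10 (fun j => W j k)
      (E2Aux.rayleigh1 m V dd hVspec hV1 lam1 hl1 (m *ᵥ fun j => W j k))
    rw [hcol1 k, mul_one] at h
    exact h
  have part3 : (m * x * mᵀ).trace ≤ lam1 * x.trace := by
    rw [hmxm, E2Aux.trace_conj, htrx, Finset.mul_sum]
    exact Finset.sum_le_sum fun k _ => mul_le_mul_of_nonneg_right (hgkk k) (hμ0 k)
  have he2m : e2 (m * x * mᵀ)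
      = (1/2) * ∑ k, ∑ l, μ k * μ l
        * ((cMᵀ * cM) k k * (cMᵀ * cM) l l - ((cMᵀ * cM) k l) ^ 2) := by
    unfold e2
    rw [hmxm, E2Aux.trace_conj, E2Aux.trace_conj_sq]
    congr 1
    rw [sq, Finset.sum_mul_sum, ← Finset.sum_sub_distrib]
    refine Finset.sum_congr rfl fun k _ => ?_
    rw [← Finset.sum_sub_distrib]
    exact Finset.sum_congr rfl fun l _ => by ring
  have hbound : ∀ k l, μ k * μ l
        * ((cMᵀ * cM) k k * (cMᵀ * cM) l l - ((cMᵀ * cM) k l) ^ 2)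
      ≤ μ k * μ l * (if k = l then 0 else lam1 * lam2) := by
    intro k l
    by_cases hkl : k = l
    · subst hkl
      have h0 : (cMᵀ * cM) k k * (cMᵀ * cM) k k - ((cMᵀ * cM) k k) ^ 2 = 0 := by ring
      rw [h0, if_pos rfl]
    · rw [if_neg hkl]
      apply mul_le_mul_of_nonneg_left _ (mul_nonneg (hμ0 k) (hμ0 l))
      rw [hgram k k, hgram l l, hgram k l]
      exact E2Aux.plane_bound m V dd hVspec hV1 i₀ lam1 lam2 hl1 hl2 hl10 hl20
        (fun j => W j k) (fun j => W j l) (hcol1 k) (hcol1 l) (hcol0 k l hkl)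
  have part4 : e2 (m * x * mᵀ) ≤ lam1 * lam2 * e2 x := by
    rw [he2m, he2x]
    have hsum : ∑ k, ∑ l, μ k * μ l
          * ((cMᵀ * cM) k k * (cMᵀ * cM) l l - ((cMᵀ * cM) k l) ^ 2)
        ≤ ∑ k, ∑ l, μ k * μ l * (if k = l then 0 else lam1 * lam2) :=
      Finset.sum_le_sum fun k _ => Finset.sum_le_sum fun l _ => hbound k l
    rw [E2Aux.sum_offdiag] at hsum
    linarith
  exact ⟨⟨part1a, part1b⟩, part2, part3, part4⟩
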